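/- arXiv:1706.04935 — 3 statements merged into one kernel-verified Lean document; each statement's English description precedes it below -/
import Mathlib

section
/- Let D ⊆ [n]² be a diagram with columns D_j = {i : (i,j) ∈ D}, let j ∈ [n], and let I ⊆ [n]. Then θ_D^j(I) = r_j(I), where r_j is the rank function of the Schubert matroid SM_n(D_j); that is, the number of paired ()'s in word_{j,I}(D) plus the number of ⋆'s in word_{j,I}(D) equals max{ #(I ∩ B) : B ≤ D_j }. -/
open Finset

/-- `DomLE R S`: `R` and `S` have the same cardinality and, for each `k`, the `k`-th least
element of `R` does not exceed the `k`-th least element of `S`.  The bases of the Schubert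
matroid `SM_n(S)` are exactly the `B` with `DomLE B S`. -/
def DomLE {α : Type*} [LinearOrder α] (R S : Finset α) : Prop :=
  R.card = S.card ∧
    ∀ (k : ℕ) (hR : k < (R.sort (· ≤ ·)).length) (hS : k < (S.sort (· ≤ ·)).length),
      (R.sort (· ≤ ·)).get ⟨k, hR⟩ ≤ (S.sort (· ≤ ·)).get ⟨k, hS⟩

/-- Auxiliary greedy matching count for a parenthesis word (`true` = '(', `false` = ')'),
given the current number of unmatched open parentheses. -/
def matchedPairsAux : List Bool → ℕ → ℕ
  | [], _ => 0
  | true :: rest, o => matchedPairsAux rest (o + 1)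
  | false :: rest, 0 => matchedPairsAux rest 0
  | false :: rest, o + 1 => matchedPairsAux rest o + 1

/-- The number of paired `()`'s in a parenthesis word (`true` = '(', `false` = ')'). -/
def matchedPairs (w : List Bool) : ℕ := matchedPairsAux w 0

/-- Column `j` of a diagram `D ⊆ [n]²`: the set `D_j = {i : (i,j) ∈ D}`. -/
def colSet {n : ℕ} (D : Finset (Fin n × Fin n)) (j : Fin n) : Finset (Fin n) :=
  Finset.univ.filter fun i => (i, j) ∈ D

/-- The parenthesis part of `word_{j,I}(D)`: reading rows `i` from top to bottom, record
'(' (= `true`) if `(i,j) ∉ D` and `i ∈ I`, and ')' (= `false`) if `(i,j) ∈ D` and `i ∉ I`.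
(The `⋆`'s, at positions with `(i,j) ∈ D` and `i ∈ I`, play no role in the matching.) -/
def colWord {n : ℕ} (D : Finset (Fin n × Fin n)) (j : Fin n) (I : Finset (Fin n)) :
    List Bool :=
  (List.finRange n).filterMap fun i =>
    if (i, j) ∈ D then (if i ∈ I then none else some false)
    else (if i ∈ I then some true else none)

/-- `θ_D^j(I)`: the number of paired `()`'s plus the number of `⋆`'s in `word_{j,I}(D)`. -/
def thetaCol {n : ℕ} (D : Finset (Fin n × Fin n)) (j : Fin n) (I : Finset (Fin n)) : ℕ :=
  matchedPairs (colWord D j I) + (colSet D j ∩ I).card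

/-- `θ_D(I) = Σ_{j=1}^n θ_D^j(I)`. -/
def theta {n : ℕ} (D : Finset (Fin n × Fin n)) (I : Finset (Fin n)) : ℕ :=
  ∑ j : Fin n, thetaCol D j I

/-- Rank function of the Schubert matroid `SM_n(S)`: `r(I) = max{#(I ∩ B) : B a basis}`. -/
noncomputable def smRank {n : ℕ} (S I : Finset (Fin n)) : ℕ :=
  letI := Classical.decPred fun B : Finset (Fin n) => DomLE B S
  ((Finset.univ : Finset (Finset (Fin n))).filter fun B => DomLE B S).sup
    fun B => (I ∩ B).card

/-!
Both sides equal the least cut value `min_t (#(I ∩ [0, t)) + #(D_j ∩ [t, n)))`.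

For the word, splitting it as `p ++ q` bounds the number of matched pairs by the number of '('
in `p` plus the number of ')' in `q`, and the greedy matching attains this bound at some split;
adding the `⋆`'s, i.e. the rows of `D_j ∩ I`, turns this into the cut value.

For the matroid, `B ≤ D_j` says that `#B = #D_j` and that below every threshold `B` has at least
as many elements as `D_j`; hence `#(I ∩ B)` is at most every cut value. Conversely, if `r` is at
most every cut value, then with `m = r - #(D_j ∩ I)` one may trade the last `m` rows of `D_j \ I`
for the first `m` rows of `I \ D_j`, and the resulting basis meets `I` in at least `r` rows.
-/

theorem matchedPairsAux_le_count_false (w : List Bool) (o : ℕ) :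
    matchedPairsAux w o ≤ w.count false := by
  induction w generalizing o with
  | nil => simp [matchedPairsAux]
  | cons b w ih =>
    cases b <;> cases o <;> simp only [matchedPairsAux, List.count_cons] <;> grind

theorem matchedPairsAux_append_le (p q : List Bool) (o : ℕ) :
    matchedPairsAux (p ++ q) o ≤ o + p.count true + q.count false := by
  induction p generalizing o with
  | nil => simpa using (matchedPairsAux_le_count_false q o).trans (Nat.le_add_left _ o)
  | cons b p ih =>
    cases b <;> cases o <;> simp only [List.cons_append, matchedPairsAux, List.count_cons] <;>
      grind

/- The `o` pending '(' behave like a prefix `List.replicate o true`; the first alternative is the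
split inside that prefix. -/
theorem matchedPairsAux_eq_count_false_or_exists (w : List Bool) (o : ℕ) :
    matchedPairsAux w o = w.count false ∨
      ∃ p q, w = p ++ q ∧ matchedPairsAux w o = o + p.count true + q.count false := by
  induction w generalizing o with
  | nil => simp [matchedPairsAux]
  | cons b w ih =>
    cases b with
    | true =>
      rcases ih (o + 1) with h | ⟨p, q, rfl, h⟩
      · left; simpa [matchedPairsAux] using h
      · right
        refine ⟨true :: p, q, rfl, ?_⟩
        simp only [matchedPairsAux, h, List.count_cons_self]
        omega
    | false =>
      cases o with
      | zero =>
        right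
        rcases ih 0 with h | ⟨p, q, rfl, h⟩
        · exact ⟨[false], w, rfl, by simp [matchedPairsAux, h]⟩
        · exact ⟨false :: p, q, rfl, by simp [matchedPairsAux, h]⟩
      | succ o =>
        rcases ih o with h | ⟨p, q, rfl, h⟩
        · left; simp [matchedPairsAux, h]
        · right
          refine ⟨false :: p, q, rfl, ?_⟩
          simp only [matchedPairsAux, h, List.count_cons_of_ne Bool.false_ne_true]
          omega

theorem matchedPairs_le_of_eq_append {w p q : List Bool} (h : w = p ++ q) :
    matchedPairs w ≤ p.count true + q.count false := by
  simpa [matchedPairs, h] using matchedPairsAux_append_le p q 0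

theorem exists_eq_append_matchedPairs_eq (w : List Bool) :
    ∃ p q, w = p ++ q ∧ matchedPairs w = p.count true + q.count false := by
  rcases matchedPairsAux_eq_count_false_or_exists w 0 with h | ⟨p, q, hw, h⟩
  · exact ⟨[], w, rfl, by simpa [matchedPairs] using h⟩
  · exact ⟨p, q, hw, by simpa [matchedPairs] using h⟩

section FinWord

variable {n : ℕ}

def cutCount (O C : Finset (Fin n)) (t : ℕ) : ℕ :=
  #(O.filter fun i : Fin n => (i : ℕ) < t) + #(C.filter fun i : Fin n => t ≤ (i : ℕ))

theorem List.mem_take_finRange {t : ℕ} {i : Fin n} :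
    i ∈ (List.finRange n).take t ↔ (i : ℕ) < t := by
  simp only [List.mem_take_iff_getElem, List.getElem_finRange, List.length_finRange]
  exact ⟨fun ⟨k, hk, hi⟩ => by rw [← hi]; exact (lt_min_iff.mp hk).1,
    fun h => ⟨i, by omega, by simp⟩⟩

theorem List.mem_drop_finRange {t : ℕ} {i : Fin n} :
    i ∈ (List.finRange n).drop t ↔ t ≤ (i : ℕ) := by
  simp only [List.mem_drop_iff_getElem, List.getElem_finRange, List.length_finRange]
  exact ⟨fun ⟨k, hk, hi⟩ => by rw [← hi]; simp,
    fun h => ⟨i - t, by omega, Fin.ext (Nat.add_sub_cancel' h)⟩⟩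

theorem count_filterMap_eq_card {l : List (Fin n)} (hl : l.Nodup) (f : Fin n → Option Bool)
    (b : Bool) :
    (l.filterMap f).count b = #((univ.filter fun i => f i = some b).filter (· ∈ l)) := by
  rw [List.count_filterMap, List.countP_congr (q := fun i => decide (f i = some b)) (by simp),
    ← hl.card_eq_countP]
  congr 1
  ext i
  simp [and_comm]

theorem cutCount_eq_count_filterMap (f : Fin n → Option Bool) (t : ℕ) :
    cutCount (univ.filter fun i => f i = some true) (univ.filter fun i => f i = some false) t =
      (((List.finRange n).take t).filterMap f).count true +
        (((List.finRange n).drop t).filterMap f).count false := by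
  rw [count_filterMap_eq_card ((List.nodup_finRange n).sublist (List.take_sublist _ _)),
    count_filterMap_eq_card ((List.nodup_finRange n).sublist (List.drop_sublist _ _))]
  simp only [cutCount, List.mem_take_finRange, List.mem_drop_finRange]

theorem isLeast_cutCount_matchedPairs (f : Fin n → Option Bool) :
    IsLeast (Set.range (cutCount (univ.filter fun i => f i = some true)
      (univ.filter fun i => f i = some false))) (matchedPairs ((List.finRange n).filterMap f)) := by
  refine ⟨?_, ?_⟩
  · obtain ⟨p, q, hpq, hp⟩ := exists_eq_append_matchedPairs_eq ((List.finRange n).filterMap f)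
    obtain ⟨l₁, l₂, hl, rfl, rfl⟩ := List.filterMap_eq_append_iff.mp hpq
    refine ⟨l₁.length, ?_⟩
    rw [cutCount_eq_count_filterMap, hp, hl, List.take_left' rfl, List.drop_left' rfl]
  · rintro _ ⟨t, rfl⟩
    rw [cutCount_eq_count_filterMap]
    apply matchedPairs_le_of_eq_append
    rw [← List.filterMap_append, List.take_append_drop]

end FinWord

section DominanceOrder

variable {α : Type*} [LinearOrder α]

theorem Finset.lt_card_filter_lt_iff (s : Finset α) {m : ℕ} (h : #s = m) (k : Fin m) (a : α) :
    (k : ℕ) < #(s.filter (· < a)) ↔ s.orderEmbOfFin h k < a := by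
  set e := s.orderEmbOfFin h
  constructor
  · intro hk
    by_contra! hak
    have hsub : s.filter (· < a) ⊆ (Iio k).map e.toEmbedding := by
      intro x hx
      rw [mem_filter] at hx
      obtain ⟨i, rfl⟩ : x ∈ Set.range e := by rw [range_orderEmbOfFin]; exact hx.1
      simpa using e.lt_iff_lt.mp (hx.2.trans_le hak)
    exact absurd hk (not_lt.mpr (by simpa using card_le_card hsub))
  · intro hka
    have hsub : (Iic k).map e.toEmbedding ⊆ s.filter (· < a) := by
      intro x hx
      obtain ⟨i, hi, rfl⟩ := mem_map.mp hx
      exact mem_filter.mpr ⟨orderEmbOfFin_mem s h i, (e.monotone (mem_Iic.mp hi)).trans_lt hka⟩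
    simpa using card_le_card hsub

theorem domLE_iff_orderEmbOfFin {B S : Finset α} :
    DomLE B S ↔ ∃ h : #B = #S, ∀ k, B.orderEmbOfFin h k ≤ S.orderEmbOfFin rfl k :=
  ⟨fun ⟨h, hle⟩ => ⟨h, fun k => hle k _ _⟩,
    fun ⟨h, hle⟩ => ⟨h, fun k _ hk => hle ⟨k, by simpa using hk⟩⟩⟩

theorem domLE_iff_card_filter_lt {B S : Finset α} :
    DomLE B S ↔ #B = #S ∧ ∀ a, #(S.filter (· < a)) ≤ #(B.filter (· < a)) := by
  rw [domLE_iff_orderEmbOfFin]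
  constructor
  · rintro ⟨h, hle⟩
    refine ⟨h, fun a => ?_⟩
    by_contra! hlt
    have hS : #(S.filter (· < a)) ≤ #S := card_le_card (filter_subset _ _)
    set k : Fin #S := ⟨#(S.filter (· < a)) - 1, by omega⟩
    have hkS := (S.lt_card_filter_lt_iff rfl k a).mp (show #(S.filter (· < a)) - 1 < _ by omega)
    have hkB := (B.lt_card_filter_lt_iff h k a).mpr ((hle k).trans_lt hkS)
    simp only [k] at hkB
    omega
  · rintro ⟨h, hpre⟩
    refine ⟨h, fun k => ?_⟩
    by_contra! hlt
    have hkS := (S.lt_card_filter_lt_iff rfl k _).mpr hlt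
    have hkB := (B.lt_card_filter_lt_iff h k _).mp (hkS.trans_le (hpre _))
    exact hkB.false

theorem Finset.card_filter_lt_orderEmbOfFin (s : Finset α) {m : ℕ} (h : #s = m) (k : Fin m) :
    #(s.filter (· < s.orderEmbOfFin h k)) = k := by
  have hrank (i : Fin m) := (s.lt_card_filter_lt_iff h i (s.orderEmbOfFin h k)).trans
    (s.orderEmbOfFin h).lt_iff_lt
  rcases lt_trichotomy (#(s.filter (· < s.orderEmbOfFin h k))) k with hlt | heq | hgt
  · exact absurd ((hrank ⟨_, hlt.trans k.2⟩).mpr hlt) (lt_irrefl _)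
  · exact heq
  · exact absurd ((hrank k).mp hgt) (lt_irrefl _)

theorem DomLE.sdiff_union {X Y S : Finset α} (hXY : DomLE X Y) (hX : Disjoint X S)
    (hY : Y ⊆ S) : DomLE ((S \ Y) ∪ X) S := by
  rw [domLE_iff_card_filter_lt] at hXY ⊢
  have hdisj : Disjoint (S \ Y) X := hX.symm.mono_left sdiff_subset
  refine ⟨?_, fun a => ?_⟩
  · rw [card_union_of_disjoint hdisj, card_sdiff_of_subset hY]
    have := card_le_card hY
    omega
  · have hYa : Y.filter (· < a) ⊆ S.filter (· < a) := filter_subset_filter _ hY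
    have hsdiff : (S \ Y).filter (· < a) = S.filter (· < a) \ Y.filter (· < a) := by grind
    rw [filter_union, card_union_of_disjoint (disjoint_filter_filter hdisj), hsdiff,
      card_sdiff_of_subset hYa]
    have := card_le_card hYa
    have := hXY.2 a
    omega

end DominanceOrder

section SchubertRank

variable {n : ℕ}

theorem card_filter_val_lt_add_card_filter_val_ge (s : Finset (Fin n)) (t : ℕ) :
    #(s.filter fun i : Fin n => (i : ℕ) < t) + #(s.filter fun i : Fin n => t ≤ (i : ℕ)) = #s := by
  simpa only [not_lt] using card_filter_add_card_filter_not (s := s) fun i : Fin n => (i : ℕ) < t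

theorem domLE_iff_card_filter_val_lt {B S : Finset (Fin n)} :
    DomLE B S ↔ #B = #S ∧ ∀ t : ℕ,
      #(S.filter fun i : Fin n => (i : ℕ) < t) ≤ #(B.filter fun i : Fin n => (i : ℕ) < t) := by
  rw [domLE_iff_card_filter_lt]
  refine and_congr_right fun hcard =>
    ⟨fun h t => ?_, fun h a => by simpa only [Fin.lt_def] using h a⟩
  by_cases ht : t < n
  · simpa only [Fin.lt_def, Fin.val_mk] using h ⟨t, ht⟩
  · have hall (s : Finset (Fin n)) : s.filter (fun i : Fin n => (i : ℕ) < t) = s :=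
      filter_true_of_mem fun i _ => by omega
    rw [hall, hall, hcard]

theorem DomLE.card_filter_val_ge_le {B S : Finset (Fin n)} (h : DomLE B S) (t : ℕ) :
    #(B.filter fun i : Fin n => t ≤ (i : ℕ)) ≤ #(S.filter fun i : Fin n => t ≤ (i : ℕ)) := by
  obtain ⟨hcard, hpre⟩ := domLE_iff_card_filter_val_lt.mp h
  have hB := card_filter_val_lt_add_card_filter_val_ge B t
  have hS := card_filter_val_lt_add_card_filter_val_ge S t
  have := hpre t
  omega

theorem card_inter_le_cutCount {I B S : Finset (Fin n)} (h : DomLE B S) (t : ℕ) :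
    #(I ∩ B) ≤ cutCount I S t := by
  have hsplit := card_filter_val_lt_add_card_filter_val_ge (I ∩ B) t
  have hI := card_le_card (filter_subset_filter (fun i : Fin n => (i : ℕ) < t)
    (inter_subset_left (s₁ := I) (s₂ := B)))
  have hB := card_le_card (filter_subset_filter (fun i : Fin n => t ≤ (i : ℕ))
    (inter_subset_right (s₁ := I) (s₂ := B)))
  have := h.card_filter_val_ge_le t
  unfold cutCount
  omega

theorem cutCount_eq_card_inter_add (I S : Finset (Fin n)) (t : ℕ) :
    cutCount I S t = #(S ∩ I) + cutCount (I \ S) (S \ I) t := by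
  have hI := card_inter_add_card_sdiff (I.filter fun i : Fin n => (i : ℕ) < t) S
  have hS := card_inter_add_card_sdiff (S.filter fun i : Fin n => t ≤ (i : ℕ)) I
  have hSI := card_filter_val_lt_add_card_filter_val_ge (S ∩ I) t
  have e1 : (I.filter fun i : Fin n => (i : ℕ) < t) ∩ S =
      (S ∩ I).filter fun i : Fin n => (i : ℕ) < t := by grind
  have e2 : (I.filter fun i : Fin n => (i : ℕ) < t) \ S =
      (I \ S).filter fun i : Fin n => (i : ℕ) < t := by grind
  have e3 : (S.filter fun i : Fin n => t ≤ (i : ℕ)) ∩ I =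
      (S ∩ I).filter fun i : Fin n => t ≤ (i : ℕ) := by grind
  have e4 : (S.filter fun i : Fin n => t ≤ (i : ℕ)) \ I =
      (S \ I).filter fun i : Fin n => t ≤ (i : ℕ) := by grind
  rw [e1, e2] at hI
  rw [e3, e4] at hS
  unfold cutCount
  omega

theorem exists_card_filter_val_lt_eq (s : Finset (Fin n)) {k : ℕ} (hk : k ≤ #s) :
    ∃ t : ℕ, #(s.filter fun i : Fin n => (i : ℕ) < t) = k := by
  rcases hk.lt_or_eq with hk | rfl
  · refine ⟨s.orderEmbOfFin rfl ⟨k, hk⟩, ?_⟩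
    simpa only [Fin.lt_def] using Finset.card_filter_lt_orderEmbOfFin s rfl ⟨k, hk⟩
  · exact ⟨n, congrArg card (filter_true_of_mem fun i _ => i.2)⟩

theorem exists_domLE_of_le_cutCount {O C : Finset (Fin n)} {m : ℕ}
    (h : ∀ t, m ≤ cutCount O C t) : ∃ X ⊆ O, ∃ Y ⊆ C, #X = m ∧ DomLE X Y := by
  have hO : m ≤ #O := by
    have hn := h n
    rwa [cutCount, filter_true_of_mem fun i _ => i.2, filter_false_of_mem fun i _ => by omega,
      card_empty, add_zero] at hn
  have hC : m ≤ #C := by simpa [cutCount] using h 0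
  obtain ⟨a, hX⟩ := exists_card_filter_val_lt_eq O hO
  obtain ⟨b, hb⟩ := exists_card_filter_val_lt_eq C (Nat.sub_le #C m)
  have hY : #(C.filter fun i : Fin n => b ≤ (i : ℕ)) = m := by
    have := card_filter_val_lt_add_card_filter_val_ge C b
    omega
  refine ⟨_, filter_subset _ _, C.filter fun i : Fin n => b ≤ (i : ℕ), filter_subset _ _, hX,
    ?_⟩
  simp only [domLE_iff_card_filter_val_lt, filter_filter]
  refine ⟨hX.trans hY.symm, fun t => ?_⟩
  rcases le_or_gt a t with hat | hta
  · rw [filter_congr fun (i : Fin n) _ => show (i : ℕ) < a ∧ (i : ℕ) < t ↔ (i : ℕ) < a by omega,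
      hX, ← hY]
    exact card_le_card (monotone_filter_right _ fun i _ => And.left)
  rcases lt_or_ge t b with htb | hbt
  · rw [filter_false_of_mem fun i _ hi => by omega, card_empty]
    exact Nat.zero_le _
  · have hsplit := card_filter_val_lt_add_card_filter_val_ge (C.filter fun i : Fin n => b ≤ i) t
    have ht := h t
    simp only [filter_filter] at hsplit
    rw [filter_congr fun (i : Fin n) _ => show b ≤ (i : ℕ) ∧ t ≤ (i : ℕ) ↔ t ≤ (i : ℕ) by omega]
      at hsplit
    rw [filter_congr fun (i : Fin n) _ => show (i : ℕ) < a ∧ (i : ℕ) < t ↔ (i : ℕ) < t by omega]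
    unfold cutCount at ht
    omega

theorem exists_domLE_le_card_inter {I S : Finset (Fin n)} {r : ℕ}
    (h : ∀ t, r ≤ cutCount I S t) : ∃ B, DomLE B S ∧ r ≤ #(I ∩ B) := by
  obtain ⟨X, hXO, Y, hYC, hX, hXY⟩ := exists_domLE_of_le_cutCount (O := I \ S) (C := S \ I)
    (m := r - #(S ∩ I)) fun t => by have := h t; rw [cutCount_eq_card_inter_add] at this; omega
  have hXS : Disjoint X S := disjoint_of_subset_left hXO sdiff_disjoint
  refine ⟨(S \ Y) ∪ X, hXY.sdiff_union hXS (hYC.trans sdiff_subset), ?_⟩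
  have hsub : (S ∩ I) ∪ X ⊆ I ∩ ((S \ Y) ∪ X) := by
    intro i hi
    have := @hXO i
    have := @hYC i
    simp only [mem_union, mem_inter, mem_sdiff] at *
    tauto
  calc r ≤ #(S ∩ I) + #X := by omega
    _ = #((S ∩ I) ∪ X) := (card_union_of_disjoint (hXS.symm.mono_left inter_subset_left)).symm
    _ ≤ #(I ∩ ((S \ Y) ∪ X)) := card_le_card hsub

theorem smRank_eq_of_isLeast {I S : Finset (Fin n)} {r : ℕ}
    (h : IsLeast (Set.range (cutCount I S)) r) : smRank S I = r := by
  obtain ⟨⟨t, rfl⟩, hmin⟩ := h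
  classical
  unfold smRank
  apply le_antisymm
  · exact Finset.sup_le fun B hB => card_inter_le_cutCount (mem_filter.mp hB).2 t
  · obtain ⟨B, hB, hle⟩ := exists_domLE_le_card_inter fun t' => hmin ⟨t', rfl⟩
    exact hle.trans (Finset.le_sup (f := fun B => #(I ∩ B)) (mem_filter.mpr ⟨mem_univ B, hB⟩))

end SchubertRank

section Column

variable {n : ℕ} (D : Finset (Fin n × Fin n)) (j : Fin n) (I : Finset (Fin n))

def colLetter (i : Fin n) : Option Bool :=
  if (i, j) ∈ D then (if i ∈ I then none else some false)
  else (if i ∈ I then some true else none)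

theorem colWord_eq_filterMap :
    colWord D j I = (List.finRange n).filterMap (colLetter D j I) := rfl

theorem filter_colLetter_eq_some_true :
    univ.filter (fun i => colLetter D j I i = some true) = I \ colSet D j := by
  ext i
  rw [mem_filter, mem_sdiff]
  simp only [mem_univ, true_and, colSet, colLetter, mem_filter]
  by_cases hD : (i, j) ∈ D <;> by_cases hI : i ∈ I <;> simp [hD, hI]

theorem filter_colLetter_eq_some_false :
    univ.filter (fun i => colLetter D j I i = some false) = colSet D j \ I := by
  ext i
  rw [mem_filter, mem_sdiff]
  simp only [mem_univ, true_and, colSet, colLetter, mem_filter]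
  by_cases hD : (i, j) ∈ D <;> by_cases hI : i ∈ I <;> simp [hD, hI]

theorem isLeast_cutCount_thetaCol :
    IsLeast (Set.range (cutCount I (colSet D j))) (thetaCol D j I) := by
  have h := isLeast_cutCount_matchedPairs (colLetter D j I)
  rw [filter_colLetter_eq_some_true, filter_colLetter_eq_some_false] at h
  have hcut : cutCount I (colSet D j) =
      (#(colSet D j ∩ I) + ·) ∘ cutCount (I \ colSet D j) (colSet D j \ I) :=
    funext (cutCount_eq_card_inter_add I _)
  rw [hcut, Set.range_comp, thetaCol, colWord_eq_filterMap, add_comm]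
  exact Monotone.map_isLeast (fun _ _ hab => Nat.add_le_add_left hab _) h

end Column

/-- For a diagram `D ⊆ [n]²`, a column index `j` and `I ⊆ [n]`:
`θ_D^j(I) = r_j(I)`, i.e. the number of paired `()`'s plus the number of `⋆`'s in
`word_{j,I}(D)` equals `max{#(I ∩ B) : B ≤ D_j}`, the rank of `I` in `SM_n(D_j)`. -/
theorem stmt2 (n : ℕ) (D : Finset (Fin n × Fin n)) (j : Fin n) (I : Finset (Fin n)) :
    thetaCol D j I = smRank (colSet D j) I :=
  (smRank_eq_of_isLeast (isLeast_cutCount_thetaCol D j I)).symm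
end

section
/- Let D = (D_1, ..., D_n) with each D_j ⊆ [n]. For a tuple C = (C_1, ..., C_n) of subsets of [n], write C ≤ D if C_j ≤ D_j for all j, and define ξ^C ∈ ℤ^n by ξ^C_i = #{ j : i ∈ C_j }. Then the set of lattice points of the Minkowski sum Σ_{j=1}^n P(SM_n(D_j)) is exactly { ξ^C : C ≤ D }. -/
/-!
The bases of `SM_n(S)` are the bases of a matroid on `[n]`, whose independent sets are the `I` with
`#{i ∈ I | t ≤ i} ≤ #{s ∈ S | t ≤ s}` for every threshold `t`. Each polytope `P(SM_n(D_j))`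
satisfies the rank inequalities `y(A) ≤ r_j(A)` and `y([n]) = r_j([n])`, so a lattice point `q` of
the Minkowski sum satisfies `q(A) ≤ Σ_j r_j(A)`, with equality at `A = [n]`. Such a `q` is a sum of
indicator vectors of bases, one of each matroid (the integral matroid union theorem): by induction
on `Σ q`, choose `x` with `q_x > 0` and an index `j₀` such that `x` raises the rank `r_{j₀}` of
every tight set not containing it (tight sets are closed under union by submodularity, so the
union of counterexamples would violate the inequality at `A ∪ {x}`); then contracting `x` in the
`j₀`-th matroid and lowering `q_x` by one preserves all the inequalities.
-/

open Finset Pointwise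

/-- Indicator vector `ζ^B ∈ {0,1}^n ⊆ ℝ^n` of a subset `B ⊆ [n]`. -/
def indVec {n : ℕ} (B : Finset (Fin n)) : Fin n → ℝ := fun i => if i ∈ B then 1 else 0

/-- Matroid polytope `P(SM_n(S))` of the Schubert matroid `SM_n(S)`: the convex hull in
`ℝ^n` of the indicator vectors of its bases, i.e. of the `B` with `B ≤ S`. -/
def smPolytope {n : ℕ} (S : Finset (Fin n)) : Set (Fin n → ℝ) :=
  convexHull ℝ {x | ∃ B : Finset (Fin n), DomLE B S ∧ x = indVec B}

namespace Matroid

variable {α : Type*} {M : Matroid α} {X Y : Set α} {e : α}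

noncomputable def rk (M : Matroid α) (X : Set α) : ℕ := (M.eRk X).toNat

lemma IsNonloop.eRk_contractElem_add_one (he : M.IsNonloop e) (X : Set α) :
    (M ／ {e}).eRk X + 1 = M.eRk (insert e X) := by
  apply le_antisymm
  · obtain ⟨J, hJ⟩ := (M ／ {e}).exists_isBasis' X
    obtain ⟨heJ, hJe⟩ := he.contractElem_indep_iff.1 hJ.indep
    rw [← hJ.encard_eq_eRk, ← Set.encard_insert_of_notMem heJ]
    exact hJe.encard_le_eRk_of_subset (Set.insert_subset_insert hJ.subset)
  · obtain ⟨I, hI, heI⟩ := he.indep.subset_isBasis'_of_subset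
      (Set.singleton_subset_iff.2 (Set.mem_insert e X))
    have heI' : e ∈ I := heI rfl
    rw [← hI.encard_eq_eRk, ← Set.encard_sdiff_singleton_add_one heI']
    gcongr
    refine (he.contractElem_indep_iff.2 ⟨fun h => h.2 rfl, ?_⟩).encard_le_eRk_of_subset ?_
    · rw [Set.insert_sdiff_singleton, Set.insert_eq_of_mem heI']
      exact hI.indep
    · intro a ⟨haI, hae⟩
      exact (hI.subset haI).resolve_left hae

lemma IsBase.insert_of_contractElem {B : Set α} (he : M.IsNonloop e) (hB : (M ／ {e}).IsBase B) :
    e ∉ B ∧ M.IsBase (insert e B) := by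
  obtain ⟨hBe, hdisj⟩ := he.indep.contract_isBase_iff.1 hB
  exact ⟨Set.disjoint_singleton_right.1 hdisj, by rwa [Set.union_singleton] at hBe⟩

@[simp] lemma rk_empty (M : Matroid α) : M.rk ∅ = 0 := by simp [rk]

variable [Finite α]

lemma cast_rk (M : Matroid α) (X : Set α) : (M.rk X : ℕ∞) = M.eRk X :=
  ENat.natCast_toNat (eRk_ne_top_iff.2 (M.isRkFinite_set X))

lemma rk_mono (M : Matroid α) (h : X ⊆ Y) : M.rk X ≤ M.rk Y := by
  rw [← Nat.cast_le (α := ℕ∞), cast_rk, cast_rk]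
  exact M.eRk_mono h

lemma rk_inter_add_rk_union_le (M : Matroid α) (X Y : Set α) :
    M.rk (X ∩ Y) + M.rk (X ∪ Y) ≤ M.rk X + M.rk Y := by
  rw [← Nat.cast_le (α := ℕ∞)]
  push_cast
  simp only [cast_rk]
  exact M.eRk_inter_add_eRk_union_le X Y

lemma rk_insert_le_of_subset (M : Matroid α) (hX : M.rk (insert e X) ≤ M.rk X) (hXY : X ⊆ Y) :
    M.rk (insert e Y) ≤ M.rk Y := by
  have hsub := M.rk_inter_add_rk_union_le (insert e X) Y
  have hXinter : X ⊆ insert e X ∩ Y := Set.subset_inter (Set.subset_insert e X) hXY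
  rw [Set.insert_union, Set.union_eq_right.2 hXY] at hsub
  have := M.rk_mono hXinter
  omega

lemma IsNonloop.rk_contractElem_add_one (he : M.IsNonloop e) (X : Set α) :
    (M ／ {e}).rk X + 1 = M.rk (insert e X) := by
  rw [← Nat.cast_inj (R := ℕ∞)]
  push_cast
  rw [cast_rk, cast_rk, he.eRk_contractElem_add_one]

lemma isNonloop_of_rk_pos (h : 0 < M.rk {e}) : M.IsNonloop e := by
  rw [← eRk_singleton_eq_one_iff]
  refine le_antisymm (M.eRk_singleton_le e) ?_
  rw [← cast_rk]
  exact_mod_cast h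

lemma IsBase.card_inter_le_rk [DecidableEq α] {B : Finset α} (hB : M.IsBase B) (A : Finset α) :
    #(B ∩ A) ≤ M.rk A := by
  rw [← Nat.cast_le (α := ℕ∞), cast_rk, ← Set.encard_coe_eq_coe_finsetCard, coe_inter]
  exact (hB.indep.subset Set.inter_subset_left).encard_le_eRk_of_subset Set.inter_subset_right

lemma IsBase.card_eq_rk_univ {B : Finset α} (hB : M.IsBase B) : #B = M.rk Set.univ := by
  rw [← Nat.cast_inj (R := ℕ∞), cast_rk, ← Set.encard_coe_eq_coe_finsetCard, eRk_univ_eq,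
    hB.encard_eq_eRank]

lemma isBase_empty_of_rk_univ_eq_zero (h : M.rk Set.univ = 0) : M.IsBase ∅ := by
  obtain ⟨B, hB⟩ := M.exists_isBase
  have : B.encard = 0 := by rw [hB.encard_eq_eRank, ← eRk_univ_eq, ← cast_rk, h]; rfl
  rwa [Set.encard_eq_zero.1 this] at hB

end Matroid

lemma Finset.sum_comp_update_add {ι β M : Type*} [Fintype ι] [DecidableEq ι] [AddCommMonoid M]
    (g : β → M) (f : ι → β) (j₀ : ι) (b : β) :
    ∑ j, g (Function.update f j₀ b j) + g (f j₀) = ∑ j, g (f j) + g b := by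
  rw [← add_sum_erase _ _ (mem_univ j₀), ← add_sum_erase _ _ (mem_univ j₀), Function.update_self,
    sum_congr rfl fun j hj => by rw [Function.update_of_ne (ne_of_mem_erase hj)]]
  abel

lemma Finset.sum_update_sub_one_add {α : Type*} [DecidableEq α] (q : α → ℕ) {x : α} (hx : 0 < q x)
    (A : Finset α) :
    ∑ i ∈ A, Function.update q x (q x - 1) i + (if x ∈ A then 1 else 0) = ∑ i ∈ A, q i := by
  split_ifs with hxA
  · rw [sum_update_of_mem hxA, ← add_sum_erase _ _ hxA, sdiff_singleton_eq_erase]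
    omega
  · rw [sum_update_of_notMem hxA, add_zero]

lemma Finset.card_filter_insert_of_notMem {β : Type*} [DecidableEq β] (p : β → Prop)
    [DecidablePred p] {I : Finset β} {x : β} (hx : x ∉ I) :
    #{i ∈ insert x I | p i} = #{i ∈ I | p i} + if p x then 1 else 0 := by
  rw [filter_insert]
  split_ifs with hpx
  · exact card_insert_of_notMem fun h => hx (mem_filter.1 h).1
  · rfl

lemma Finset.card_filter_mem_update_insert {ι α : Type*} [Fintype ι] [DecidableEq ι]
    [DecidableEq α] (C : ι → Finset α) {j₀ : ι} {x : α} (hx : x ∉ C j₀) (i : α) :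
    #{j | i ∈ Function.update C j₀ (insert x (C j₀)) j} =
      #{j | i ∈ C j} + if i = x then 1 else 0 := by
  split_ifs with hix
  · subst hix
    have : univ.filter (fun j => i ∈ Function.update C j₀ (insert i (C j₀)) j) =
        insert j₀ (univ.filter fun j => i ∈ C j) := by
      ext j
      by_cases hj : j = j₀ <;> simp [hj]
    rw [this, card_insert_of_notMem (by simpa using hx)]
  · congr 1
    ext j
    by_cases hj : j = j₀ <;> simp [hj, hix]

namespace Matroid

section Decomposition

variable {ι α : Type*} [Fintype ι] {M : ι → Matroid α} {q : α → ℕ}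

def IsTight (M : ι → Matroid α) (q : α → ℕ) (A : Finset α) : Prop :=
  ∑ i ∈ A, q i = ∑ j, (M j).rk A

lemma isTight_empty : IsTight M q ∅ := by
  simp [IsTight]

lemma exists_isBase_update_insert [DecidableEq ι] [DecidableEq α] {x : α} {j₀ : ι}
    (hnl : (M j₀).IsNonloop x) {C : ι → Finset α}
    (hC : ∀ j, (Function.update M j₀ (M j₀ ／ {x}) j).IsBase (C j)) :
    ∃ C' : ι → Finset α, (∀ j, (M j).IsBase (C' j)) ∧
      ∀ i, #{j | i ∈ C' j} = #{j | i ∈ C j} + if i = x then 1 else 0 := by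
  have hCj₀ := hC j₀
  rw [Function.update_self] at hCj₀
  obtain ⟨hxC, hbase⟩ := hCj₀.insert_of_contractElem hnl
  refine ⟨Function.update C j₀ (insert x (C j₀)), fun j => ?_,
    card_filter_mem_update_insert C hxC⟩
  by_cases hj : j = j₀
  · subst hj
    simpa using hbase
  · simpa [hj] using hC j

section Finite

variable [Finite α] [DecidableEq α]

lemma IsTight.union (hle : ∀ A : Finset α, ∑ i ∈ A, q i ≤ ∑ j, (M j).rk A) {A A' : Finset α}
    (hA : IsTight M q A) (hA' : IsTight M q A') : IsTight M q (A ∪ A') := by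
  have hsubmod : ∑ j, (M j).rk ↑(A ∩ A') + ∑ j, (M j).rk ↑(A ∪ A') ≤
      ∑ j, (M j).rk A + ∑ j, (M j).rk A' := by
    simp only [← sum_add_distrib, coe_inter, coe_union]
    exact sum_le_sum fun j _ => (M j).rk_inter_add_rk_union_le _ _
  have hmod := sum_union_inter (s₁ := A) (s₂ := A') (f := q)
  have := hle (A ∪ A')
  have := hle (A ∩ A')
  unfold IsTight at *
  omega

lemma exists_rk_lt_rk_insert_of_isTight (hle : ∀ A : Finset α, ∑ i ∈ A, q i ≤ ∑ j, (M j).rk A)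
    {x : α} (hx : 0 < q x) :
    ∃ j₀, ∀ A, IsTight M q A → x ∉ A → (M j₀).rk A < (M j₀).rk ↑(insert x A) := by
  by_contra! h
  choose A hA hxA hrk using h
  have hU : IsTight M q (univ.sup A) :=
    sup_induction isTight_empty (fun _ h₁ _ h₂ => h₁.union hle h₂) fun j _ => hA j
  have hxU : x ∉ univ.sup A := by simpa [mem_sup] using hxA
  have hrkU : ∀ j, (M j).rk ↑(insert x (univ.sup A)) ≤ (M j).rk ↑(univ.sup A) := fun j => by
    have hrkj := hrk j
    rw [coe_insert] at hrkj ⊢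
    exact (M j).rk_insert_le_of_subset hrkj (coe_subset.2 (le_sup (mem_univ j)))
  have := hle (insert x (univ.sup A))
  rw [sum_insert hxU, hU] at this
  have := sum_le_sum fun j (_ : j ∈ univ) => hrkU j
  omega

lemma le_sum_rk_update_contractElem [DecidableEq ι]
    (hle : ∀ A : Finset α, ∑ i ∈ A, q i ≤ ∑ j, (M j).rk A) {x : α} {j₀ : ι} (hx : 0 < q x)
    (hnl : (M j₀).IsNonloop x)
    (hj₀ : ∀ A, IsTight M q A → x ∉ A → (M j₀).rk A < (M j₀).rk ↑(insert x A)) (A : Finset α) :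
    ∑ i ∈ A, Function.update q x (q x - 1) i ≤
      ∑ j, (Function.update M j₀ (M j₀ ／ {x}) j).rk A := by
  have hq := sum_update_sub_one_add q hx A
  have hM := sum_comp_update_add (fun N : Matroid α => N.rk A) M j₀ (M j₀ ／ {x})
  have hcon := hnl.rk_contractElem_add_one A
  have hleA := hle A
  split_ifs at hq with hxA
  · rw [Set.insert_eq_of_mem (mem_coe.2 hxA)] at hcon
    omega
  · by_cases hT : IsTight M q A
    · have hjump := hj₀ A hT hxA
      rw [coe_insert] at hjump
      unfold IsTight at hT
      omega
    · have := (M j₀).rk_mono (Set.subset_insert x (A : Set α))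
      unfold IsTight at hT
      omega

end Finite

theorem exists_isBase_card_filter_mem_eq [Fintype α] [DecidableEq α] (M : ι → Matroid α) (q : α → ℕ)
    (hle : ∀ A : Finset α, ∑ i ∈ A, q i ≤ ∑ j, (M j).rk A)
    (hsum : ∑ j, (M j).rk Set.univ ≤ ∑ i, q i) :
    ∃ B : ι → Finset α, (∀ j, (M j).IsBase (B j)) ∧ ∀ i, #{j | i ∈ B j} = q i := by
  classical
  induction hN : ∑ i, q i generalizing M q with
  | zero =>
    have hq : ∀ i, q i = 0 := by simpa using hN
    have hrk : ∀ j, (M j).rk Set.univ = 0 := by simpa [hN] using hsum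
    refine ⟨fun _ => ∅, fun j => ?_, fun i => by simp [hq]⟩
    simpa using isBase_empty_of_rk_univ_eq_zero (hrk j)
  | succ N ih =>
    obtain ⟨x, -, hx⟩ := exists_lt_of_sum_lt (s := univ) (f := 0) (g := q) (by simp [hN])
    obtain ⟨j₀, hj₀⟩ := exists_rk_lt_rk_insert_of_isTight hle hx
    have hnl : (M j₀).IsNonloop x :=
      isNonloop_of_rk_pos (by simpa using hj₀ ∅ isTight_empty (notMem_empty x))
    have hq := sum_update_sub_one_add q hx univ
    have hM := sum_comp_update_add (fun N : Matroid α => N.rk Set.univ) M j₀ (M j₀ ／ {x})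
    have hcon := hnl.rk_contractElem_add_one Set.univ
    simp only [mem_univ, if_true, Set.insert_eq_of_mem (Set.mem_univ x)] at hq hM hcon
    obtain ⟨C, hC, hcount⟩ := ih _ _ (le_sum_rk_update_contractElem hle hx hnl hj₀) (by omega)
      (by omega)
    obtain ⟨C', hC', hcount'⟩ := exists_isBase_update_insert hnl hC
    refine ⟨C', hC', fun i => ?_⟩
    rw [hcount', hcount]
    by_cases hix : i = x
    · subst hix
      rw [Function.update_self, if_pos rfl]
      omega
    · rw [Function.update_of_ne hix, if_neg hix, add_zero]

end Decomposition

end Matroid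

section Schubert

variable {α : Type*} [LinearOrder α]

lemma Finset.orderEmbOfFin_lt_iff (R : Finset α) {m : ℕ} (h : #R = m) (k : Fin m) (t : α) :
    R.orderEmbOfFin h k < t ↔ (k : ℕ) < #{r ∈ R | r < t} := by
  set f := R.orderEmbOfFin h
  constructor
  · intro hkt
    have hsub : (Iic k).map f.toEmbedding ⊆ {r ∈ R | r < t} := by
      simp only [subset_iff, mem_map, mem_Iic, mem_filter]
      rintro _ ⟨j, hjk, rfl⟩
      exact ⟨orderEmbOfFin_mem R h j, (f.monotone hjk).trans_lt hkt⟩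
    simpa using card_le_card hsub
  · intro hk
    by_contra! htk
    have hsub : {r ∈ R | r < t} ⊆ (Iio k).map f.toEmbedding := by
      intro r hr
      obtain ⟨hrR, hrt⟩ := mem_filter.1 hr
      obtain ⟨j, rfl⟩ : r ∈ Set.range f := by rwa [range_orderEmbOfFin]
      exact mem_map_of_mem _ (mem_Iio.2 (f.lt_iff_lt.1 (hrt.trans_le htk)))
    simpa using (card_le_card hsub).trans_lt' hk

lemma Finset.sort_get_lt_iff (R : Finset α) (k : Fin (R.sort (· ≤ ·)).length) (t : α) :
    (R.sort (· ≤ ·)).get k < t ↔ (k : ℕ) < #{r ∈ R | r < t} :=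
  R.orderEmbOfFin_lt_iff (length_sort _).symm k t

lemma domLE_iff (R S : Finset α) :
    DomLE R S ↔ #R = #S ∧ ∀ t, #{s ∈ S | s < t} ≤ #{r ∈ R | r < t} := by
  refine and_congr_right fun hcard => ⟨fun h t => ?_, fun h k hR hS => ?_⟩
  · by_contra! hlt
    have hS : #{r ∈ R | r < t} < (S.sort (· ≤ ·)).length :=
      hlt.trans_le ((card_filter_le _ _).trans (length_sort _).ge)
    have hR : #{r ∈ R | r < t} < (R.sort (· ≤ ·)).length := by
      rw [length_sort, hcard]
      exact hlt.trans_le (card_filter_le _ _)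
    have hSt := (S.sort_get_lt_iff ⟨_, hS⟩ t).2 hlt
    exact (lt_irrefl _) ((R.sort_get_lt_iff ⟨_, hR⟩ t).1 ((h _ hR hS).trans_lt hSt))
  · by_contra! hlt
    set t := (R.sort (· ≤ ·)).get ⟨k, hR⟩
    have hSt := (S.sort_get_lt_iff ⟨k, hS⟩ t).1 hlt
    exact (lt_irrefl t) ((R.sort_get_lt_iff ⟨k, hR⟩ t).2 (hSt.trans_le (h t)))

def IsSchubertIndep (S I : Finset α) : Prop :=
  ∀ t, #{i ∈ I | t ≤ i} ≤ #{s ∈ S | t ≤ s}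

lemma isSchubertIndep_self (S : Finset α) : IsSchubertIndep S S := fun _ => le_rfl

lemma IsSchubertIndep.mono {S I J : Finset α} (hJ : IsSchubertIndep S J) (hIJ : I ⊆ J) :
    IsSchubertIndep S I :=
  fun t => (card_le_card (filter_subset_filter _ hIJ)).trans (hJ t)

lemma IsSchubertIndep.card_le {S I : Finset α} (hI : IsSchubertIndep S I) : #I ≤ #S := by
  obtain rfl | hne := I.eq_empty_or_nonempty
  · simp
  have := hI (I.min' hne)
  rw [filter_true_of_mem fun i hi => min'_le I i hi] at this
  exact this.trans (card_filter_le _ _)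

/-- If `I` is tight against `S` at `t`, counting below `t` puts some element of `J \ I` below `t`;
hence inserting `min (J \ I)` keeps every count within its bound. -/
lemma IsSchubertIndep.exists_insert {S I J : Finset α} (hI : IsSchubertIndep S I)
    (hJ : IsSchubertIndep S J) (hlt : #I < #J) :
    ∃ x ∈ J, x ∉ I ∧ IsSchubertIndep S (insert x I) := by
  have hne : (J \ I).Nonempty := sdiff_nonempty.2 fun h => hlt.not_ge (card_le_card h)
  set x := (J \ I).min' hne
  obtain ⟨hxJ, hxI⟩ := mem_sdiff.1 (min'_mem _ hne)
  refine ⟨x, hxJ, hxI, fun t => ?_⟩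
  rw [card_filter_insert_of_notMem (t ≤ ·) hxI]
  split_ifs with htx
  · refine (hI t).lt_of_ne fun htight => ?_
    have hIt := card_filter_add_card_filter_not (s := I) (t ≤ ·)
    have hJt := card_filter_add_card_filter_not (s := J) (t ≤ ·)
    have := hJ t
    have hsub : ¬ {j ∈ J | ¬ t ≤ j} ⊆ {i ∈ I | ¬ t ≤ i} := fun h => by
      have := card_le_card h
      omega
    obtain ⟨y, hy, hyI⟩ := not_subset.1 hsub
    obtain ⟨hyJ, hyt⟩ := mem_filter.1 hy
    have hyx : x ≤ y := min'_le _ y (mem_sdiff.2 ⟨hyJ, fun h => hyI (mem_filter.2 ⟨h, hyt⟩)⟩)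
    exact hyt (htx.trans hyx)
  · exact hI t

def schubertMatroid (S : Finset α) : Matroid α :=
  (IndepMatroid.ofFinset Set.univ (IsSchubertIndep S) (fun t => by simp)
    (fun _ _ hJ hIJ => hJ.mono hIJ) (fun _ _ hI hJ hlt => hI.exists_insert hJ hlt)
    (fun _ _ => Set.subset_univ _)).matroid

@[simp] lemma schubertMatroid_indep_iff {S I : Finset α} :
    (schubertMatroid S).Indep I ↔ IsSchubertIndep S I := by
  rw [schubertMatroid, IndepMatroid.matroid_indep_iff]
  exact IndepMatroid.ofFinset_indep ..

lemma schubertMatroid_isBase_iff {S B : Finset α} :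
    (schubertMatroid S).IsBase B ↔ #B = #S ∧ IsSchubertIndep S B := by
  constructor
  · intro hB
    have hBS := (schubertMatroid_indep_iff.1 hB.indep).card_le
    have hSB := (schubertMatroid_indep_iff.2 (isSchubertIndep_self S)).encard_le_eRank
    rw [← hB.encard_eq_eRank, Set.encard_coe_eq_coe_finsetCard,
      Set.encard_coe_eq_coe_finsetCard, Nat.cast_le] at hSB
    exact ⟨hBS.antisymm hSB, schubertMatroid_indep_iff.1 hB.indep⟩
  · rintro ⟨hcard, hB⟩
    refine (schubertMatroid_indep_iff.2 hB).isBase_of_forall_insert fun e he hins => ?_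
    rw [← coe_insert, schubertMatroid_indep_iff] at hins
    have := hins.card_le
    rw [card_insert_of_notMem (by simpa using he.2)] at this
    omega

lemma domLE_iff_isBase_schubertMatroid {B S : Finset α} :
    DomLE B S ↔ (schubertMatroid S).IsBase B := by
  rw [domLE_iff, schubertMatroid_isBase_iff]
  refine and_congr_right fun hcard => forall_congr' fun t => ?_
  have hB := card_filter_add_card_filter_not (s := B) (t ≤ ·)
  have hS := card_filter_add_card_filter_not (s := S) (t ≤ ·)
  simp only [not_le] at hB hS
  omega

end Schubert

namespace Matroid

section RankPolyhedron

variable {α : Type*} [Fintype α] (M : Matroid α)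

def rankPolyhedron : Set (α → ℝ) :=
  {y | (∀ i, 0 ≤ y i) ∧ (∀ A : Finset α, ∑ i ∈ A, y i ≤ M.rk A) ∧ (M.rk Set.univ : ℝ) ≤ ∑ i, y i}

lemma convex_rankPolyhedron : Convex ℝ M.rankPolyhedron := by
  rintro y ⟨hy₀, hyA, hyU⟩ z ⟨hz₀, hzA, hzU⟩ a b ha hb hab
  have hsum : ∀ A : Finset α,
      ∑ i ∈ A, (a • y + b • z) i = a * ∑ i ∈ A, y i + b * ∑ i ∈ A, z i := fun A => by
    simp [sum_add_distrib, mul_sum]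
  refine ⟨fun i => ?_, fun A => ?_, ?_⟩
  · simpa using add_nonneg (mul_nonneg ha (hy₀ i)) (mul_nonneg hb (hz₀ i))
  · rw [hsum]
    nlinarith [mul_le_mul_of_nonneg_left (hyA A) ha, mul_le_mul_of_nonneg_left (hzA A) hb]
  · rw [hsum]
    nlinarith [mul_le_mul_of_nonneg_left hyU ha, mul_le_mul_of_nonneg_left hzU hb]

variable [DecidableEq α]

lemma convexHull_isBase_subset_rankPolyhedron :
    convexHull ℝ {y | ∃ B : Finset α, M.IsBase B ∧ y = fun i => if i ∈ B then 1 else 0} ⊆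
      M.rankPolyhedron := by
  refine convexHull_min ?_ M.convex_rankPolyhedron
  rintro _ ⟨B, hB, rfl⟩
  refine ⟨fun i => by dsimp only; split_ifs <;> norm_num, fun A => ?_, ?_⟩
  · rw [sum_boole, filter_mem_eq_inter, inter_comm]
    exact_mod_cast hB.card_inter_le_rk A
  · rw [sum_boole, filter_mem_eq_inter, univ_inter, hB.card_eq_rk_univ]

theorem exists_isBase_of_sum_mem_rankPolyhedron {ι : Type*} [Fintype ι] (M : ι → Matroid α)
    (y : ι → α → ℝ) (hy : ∀ j, y j ∈ (M j).rankPolyhedron)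
    (hint : ∀ i, ∃ m : ℤ, ∑ j, y j i = m) :
    ∃ B : ι → Finset α, (∀ j, (M j).IsBase (B j)) ∧ ∀ i, (#{j | i ∈ B j} : ℝ) = ∑ j, y j i := by
  choose m hm using hint
  have hm₀ : ∀ i, 0 ≤ m i := fun i => by
    exact_mod_cast (hm i).symm.trans_ge (sum_nonneg fun j _ => (hy j).1 i)
  have hq : ∀ i, (((m i).toNat : ℕ) : ℝ) = ∑ j, y j i := fun i => by
    rw [hm i, ← Int.cast_natCast, Int.toNat_of_nonneg (hm₀ i)]
  have hqA : ∀ A : Finset α, (∑ i ∈ A, (m i).toNat : ℝ) = ∑ j, ∑ i ∈ A, y j i := fun A => by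
    rw [sum_comm]
    exact sum_congr rfl fun i _ => hq i
  obtain ⟨B, hB, hcount⟩ := exists_isBase_card_filter_mem_eq M (fun i => (m i).toNat)
    (fun A => by exact_mod_cast (hqA A).trans_le (sum_le_sum fun j _ => (hy j).2.1 A))
    (by exact_mod_cast (sum_le_sum fun j _ => (hy j).2.2).trans_eq (hqA univ).symm)
  exact ⟨B, hB, fun i => by rw [hcount, hq]⟩

end RankPolyhedron

end Matroid

lemma smPolytope_subset_rankPolyhedron {n : ℕ} (S : Finset (Fin n)) :
    smPolytope S ⊆ (schubertMatroid S).rankPolyhedron := by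
  simp_rw [smPolytope, domLE_iff_isBase_schubertMatroid]
  exact (schubertMatroid S).convexHull_isBase_subset_rankPolyhedron

/-- For `D = (D_1, …, D_n)` with `D_j ⊆ [n]`, the lattice points of the Minkowski sum
`Σ_{j=1}^n P(SM_n(D_j))` are exactly the vectors `ξ^C`, `ξ^C_i = #{j : i ∈ C_j}`, over all
tuples `C = (C_1, …, C_n)` with `C_j ≤ D_j` for all `j`. -/
theorem stmt5 (n : ℕ) (D : Fin n → Finset (Fin n)) :
    {p : Fin n → ℝ | p ∈ ∑ j : Fin n, smPolytope (D j) ∧ ∀ i, ∃ m : ℤ, p i = (m : ℝ)} =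
      {p : Fin n → ℝ | ∃ C : Fin n → Finset (Fin n), (∀ j, DomLE (C j) (D j)) ∧
        p = fun i => ((Finset.univ.filter fun j => i ∈ C j).card : ℝ)} := by
  ext p
  constructor
  · rintro ⟨hp, hint⟩
    obtain ⟨y, hy, rfl⟩ := (Set.mem_fintype_sum _ _).1 hp
    obtain ⟨C, hC, hcount⟩ := Matroid.exists_isBase_of_sum_mem_rankPolyhedron
      (fun j => schubertMatroid (D j)) y (fun j => smPolytope_subset_rankPolyhedron _ (hy j))
      (by simpa only [Finset.sum_apply] using hint)
    refine ⟨C, fun j => domLE_iff_isBase_schubertMatroid.2 (hC j), funext fun i => ?_⟩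
    rw [Finset.sum_apply, hcount]
  · rintro ⟨C, hC, rfl⟩
    refine ⟨(Set.mem_fintype_sum _ _).2 ⟨fun j => indVec (C j),
      fun j => subset_convexHull ℝ _ ⟨C j, hC j, rfl⟩, ?_⟩, fun i => ⟨_, Int.cast_natCast _⟩⟩
    ext i
    simp [indVec]
end

section
/- Let D ⊆ [n]² be a diagram with columns D_j, let j ∈ [n], and let I ⊆ [n]. Suppose word_{j,I}(D) has p paired ()'s and q ⋆'s. Then there exists a basis B of SM_n(D_j) (i.e., B ≤ D_j) with #(I ∩ B) = p + q; in particular the rank of I in SM_n(D_j) is at least p + q. -/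
open Finset

/-
Greedily pair each ')' of `word_{j,I}(D)` (a row `b ∈ D_j \ I`) with an earlier unmatched '('
(a row `a ∈ I \ D_j`, `a < b`). Exchanging every paired `b` in `D_j` for its partner `a` only moves
elements to smaller rows, so the resulting `B` satisfies `B ≤ D_j`: in the Gale order this amounts
to `#{x ∈ B | t ≤ x} ≤ #{x ∈ D_j | t ≤ x}` for every `t`. Moreover `I ∩ B` consists of the `q`
rows of the ⋆'s and the `p` paired '('-rows.
-/

theorem card_inter_sdiff_union {α : Type*} [DecidableEq α] {I S O C : Finset α} (hO : O ⊆ I \ S)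
    (hC : Disjoint C I) : #(I ∩ (S \ C ∪ O)) = #(S ∩ I) + #O := by
  have hdisj : Disjoint (S ∩ I) O := disjoint_of_subset_right hO
    (disjoint_sdiff.mono_left inter_subset_left)
  rw [← card_union_of_disjoint hdisj]
  congr 1
  ext x
  have : x ∈ C → x ∉ I := fun h => disjoint_left.1 hC h
  have := @hO x
  simp only [mem_inter, mem_union, mem_sdiff] at *
  tauto

section LinearOrder

variable {α : Type*} [LinearOrder α]

theorem domLE_of_card_filter_le {B S : Finset α} (hcard : #B = #S)
    (htail : ∀ t, #{x ∈ B | t ≤ x} ≤ #{x ∈ S | t ≤ x}) : DomLE B S := by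
  refine ⟨hcard, fun k hB hS => ?_⟩
  by_contra! hlt
  set t := (B.sort (· ≤ ·)).get ⟨k, hB⟩
  have hB_tail : #B - k ≤ #{x ∈ B | t ≤ x} := by
    have := card_le_card_of_injOn (fun m => (B.sort (· ≤ ·)).get m)
      (s := Ici ⟨k, hB⟩) (t := {x ∈ B | t ≤ x})
      (fun m hm => mem_filter.2 ⟨(mem_sort _).1 (List.get_mem _ _),
        B.sortedLT_sort.strictMono_get.monotone (mem_Ici.1 hm)⟩)
      B.sortedLT_sort.strictMono_get.injective.injOn
    simpa [Fin.card_Ici] using this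
  have hS_head : k + 1 ≤ #{x ∈ S | ¬t ≤ x} := by
    have := card_le_card_of_injOn (fun m => (S.sort (· ≤ ·)).get m)
      (s := Iic ⟨k, hS⟩) (t := {x ∈ S | ¬t ≤ x})
      (fun m hm => mem_filter.2 ⟨(mem_sort _).1 (List.get_mem _ _), not_le.2 <|
        (S.sortedLT_sort.strictMono_get.monotone (mem_Iic.1 hm)).trans_lt hlt⟩)
      S.sortedLT_sort.strictMono_get.injective.injOn
    simpa [Fin.card_Iic] using this
  have := card_filter_add_card_filter_not (s := S) (fun x => t ≤ x)
  have := htail t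
  have : k < #B := by simpa using hB
  omega

theorem domLE_sdiff_union {S O C : Finset α} (hCS : C ⊆ S) (hOS : Disjoint O S)
    (hcard : #O = #C) (htail : ∀ t, #{x ∈ O | t ≤ x} ≤ #{x ∈ C | t ≤ x}) :
    DomLE (S \ C ∪ O) S := by
  have hdisj : Disjoint (S \ C) O := (hOS.mono_right sdiff_subset).symm
  refine domLE_of_card_filter_le ?_ fun t => ?_
  · rw [card_union_of_disjoint hdisj, card_sdiff_of_subset hCS, hcard,
      Nat.sub_add_cancel (card_le_card hCS)]
  · have hCt : {x ∈ C | t ≤ x} ⊆ {x ∈ S | t ≤ x} := filter_subset_filter _ hCS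
    have hsdiff : {x ∈ S \ C | t ≤ x} = {x ∈ S | t ≤ x} \ {x ∈ C | t ≤ x} := by
      ext; simp only [mem_filter, mem_sdiff]; tauto
    rw [filter_union, card_union_of_disjoint (disjoint_filter_filter hdisj), hsdiff,
      card_sdiff_of_subset hCt]
    have := card_le_card hCt
    have := htail t
    omega

theorem card_filter_insert_le_card_filter_insert {O C : Finset α} {a b : α} (hab : a ≤ b)
    (hb : b ∉ C) (htail : ∀ t, #{x ∈ O | t ≤ x} ≤ #{x ∈ C | t ≤ x}) (t : α) :
    #{x ∈ insert a O | t ≤ x} ≤ #{x ∈ insert b C | t ≤ x} := by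
  rw [filter_insert, filter_insert]
  by_cases hta : t ≤ a
  · rw [if_pos hta, if_pos (hta.trans hab), card_insert_of_notMem fun h => hb (mem_filter.1 h).1]
    exact (card_insert_le _ _).trans (Nat.succ_le_succ (htail t))
  · rw [if_neg hta]
    split_ifs
    exacts [(htail t).trans (card_le_card (subset_insert _ _)), htail t]

/-- `stk` holds the unmatched '(' read so far. Which of them a ')' is paired with does not matter
for the tail counts, since all of them precede it. -/
theorem exists_matching_of_matchedPairsAux (P : α → Option Bool) :
    ∀ (l : List α) (stk : Finset α), l.Pairwise (· < ·) →
      (∀ a ∈ stk, P a = some true ∧ ∀ b ∈ l, a < b) →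
      ∃ O C : Finset α, #O = matchedPairsAux (l.filterMap P) #stk ∧ #C = #O ∧
        O ⊆ stk ∪ {a ∈ l.toFinset | P a = some true} ∧ C ⊆ {b ∈ l.toFinset | P b = some false} ∧
        ∀ t, #{x ∈ O | t ≤ x} ≤ #{x ∈ C | t ≤ x}
  | [], _, _, _ => ⟨∅, ∅, by simp [matchedPairsAux]⟩
  | b :: l, stk, hl, hstk => by
    obtain ⟨hb, hl⟩ := List.pairwise_cons.1 hl
    have hstk_l : ∀ a ∈ stk, P a = some true ∧ ∀ c ∈ l, a < c :=
      fun a ha => ⟨(hstk a ha).1, fun c hc => (hstk a ha).2 c (List.mem_cons_of_mem _ hc)⟩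
    have hl_sub : l.toFinset ⊆ (b :: l).toFinset := by
      rw [List.toFinset_cons]; exact subset_insert _ _
    have hsub : stk ∪ {a ∈ l.toFinset | P a = some true} ⊆
        stk ∪ {a ∈ (b :: l).toFinset | P a = some true} :=
      union_subset_union_right (filter_subset_filter _ hl_sub)
    have hCsub : {a ∈ l.toFinset | P a = some false} ⊆ {a ∈ (b :: l).toFinset | P a = some false} :=
      filter_subset_filter _ hl_sub
    rcases hPb : P b with _ | _ | _
    · obtain ⟨O, C, hO, hC, hOsub, hCsub', htail⟩ :=
        exists_matching_of_matchedPairsAux P l stk hl hstk_l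
      exact ⟨O, C, by simpa [hPb] using hO, hC, hOsub.trans hsub, hCsub'.trans hCsub, htail⟩
    · obtain rfl | ⟨a, ha⟩ := stk.eq_empty_or_nonempty
      · obtain ⟨O, C, hO, hC, hOsub, hCsub', htail⟩ :=
          exists_matching_of_matchedPairsAux P l ∅ hl (by simp)
        exact ⟨O, C, by simpa [hPb, matchedPairsAux] using hO, hC, hOsub.trans hsub,
          hCsub'.trans hCsub, htail⟩
      obtain ⟨O, C, hO, hC, hOsub, hCsub', htail⟩ :=
        exists_matching_of_matchedPairsAux P l (stk.erase a) hl
          fun x hx => hstk_l x (mem_of_mem_erase hx)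
      have hab : a < b := (hstk a ha).2 b List.mem_cons_self
      have haO : a ∉ O := fun h => by
        rcases mem_union.1 (hOsub h) with h | h
        · exact notMem_erase a stk h
        · simp only [mem_filter, List.mem_toFinset] at h
          exact lt_irrefl a ((hstk a ha).2 a (List.mem_cons_of_mem _ h.1))
      have hbC : b ∉ C := fun h => by
        have := hCsub' h
        simp only [mem_filter, List.mem_toFinset] at this
        exact lt_irrefl b (hb b this.1)
      refine ⟨insert a O, insert b C, ?_, ?_, ?_, ?_, fun t => ?_⟩
      · rw [card_insert_of_notMem haO, hO, ← card_erase_add_one ha]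
        simp only [List.filterMap_cons, hPb, matchedPairsAux]
      · rw [card_insert_of_notMem haO, card_insert_of_notMem hbC, hC]
      · exact insert_subset (mem_union_left _ ha)
          ((hOsub.trans (union_subset_union_left (erase_subset _ _))).trans hsub)
      · exact insert_subset (by simp [hPb]) (hCsub'.trans hCsub)
      · exact card_filter_insert_le_card_filter_insert hab.le hbC htail t
    · have hbstk : b ∉ stk := fun h => lt_irrefl b ((hstk b h).2 b List.mem_cons_self)
      have hstk' : ∀ a ∈ insert b stk, P a = some true ∧ ∀ c ∈ l, a < c := by
        simp only [mem_insert, forall_eq_or_imp]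
        exact ⟨⟨hPb, hb⟩, hstk_l⟩
      obtain ⟨O, C, hO, hC, hOsub, hCsub', htail⟩ :=
        exists_matching_of_matchedPairsAux P l (insert b stk) hl hstk'
      refine ⟨O, C, ?_, hC, hOsub.trans ?_, hCsub'.trans hCsub, htail⟩
      · simpa [hPb, card_insert_of_notMem hbstk, matchedPairsAux] using hO
      · intro x
        simp only [mem_union, mem_insert, mem_filter, List.mem_toFinset, List.mem_cons]
        rintro ((rfl | h) | h) <;> simp_all

end LinearOrder

theorem card_inter_le_smRank {n : ℕ} {B S : Finset (Fin n)} (I : Finset (Fin n))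
    (hB : DomLE B S) : #(I ∩ B) ≤ smRank S I := by
  classical
  unfold smRank
  exact le_sup (f := fun B => #(I ∩ B)) (by simpa using hB)

theorem exists_matching_colWord {n : ℕ} (D : Finset (Fin n × Fin n)) (j : Fin n)
    (I : Finset (Fin n)) :
    ∃ O C : Finset (Fin n), #O = matchedPairs (colWord D j I) ∧ #C = #O ∧
      O ⊆ I \ colSet D j ∧ C ⊆ colSet D j \ I ∧
      ∀ t, #{x ∈ O | t ≤ x} ≤ #{x ∈ C | t ≤ x} := by
  obtain ⟨O, C, hO, hC, hOsub, hCsub, htail⟩ := exists_matching_of_matchedPairsAux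
    (fun i => if (i, j) ∈ D then (if i ∈ I then none else some false)
      else (if i ∈ I then some true else none))
    (List.finRange n) ∅ (List.pairwise_lt_finRange n) (by simp)
  refine ⟨O, C, hO, hC, hOsub.trans ?_, hCsub.trans ?_, htail⟩ <;>
  · intro i
    simp only [colSet, mem_union, mem_filter, mem_sdiff, notMem_empty, mem_univ, true_and,
      false_or]
    split_ifs <;> simp_all

/-- If `word_{j,I}(D)` has `p` paired `()`'s and `q` `⋆`'s, then there is a basis `B` of
`SM_n(D_j)` (i.e. `B ≤ D_j`) with `#(I ∩ B) = p + q`; in particular the rank of `I` in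
`SM_n(D_j)` is at least `p + q`. -/
theorem stmt17 (n : ℕ) (D : Finset (Fin n × Fin n)) (j : Fin n) (I : Finset (Fin n))
    (p q : ℕ) (hp : p = matchedPairs (colWord D j I)) (hq : q = (colSet D j ∩ I).card) :
    (∃ B : Finset (Fin n), DomLE B (colSet D j) ∧ (I ∩ B).card = p + q) ∧
      p + q ≤ smRank (colSet D j) I := by
  obtain ⟨O, C, hO, hC, hOI, hCS, htail⟩ := exists_matching_colWord D j I
  have hB : DomLE (colSet D j \ C ∪ O) (colSet D j) :=
    domLE_sdiff_union (hCS.trans sdiff_subset) (sdiff_disjoint.mono_left hOI) hC.symm htail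
  have hIB : #(I ∩ (colSet D j \ C ∪ O)) = p + q := by
    rw [card_inter_sdiff_union hOI (sdiff_disjoint.mono_left hCS)]
    omega
  exact ⟨⟨_, hB, hIB⟩, hIB ▸ card_inter_le_smRank I hB⟩
end
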